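/- Let γ ∈ (0,1) and assume (2T/δ)·sup|∂â/∂s| ≤ 1−γ, where δ := (1−d(T))/(1−d). Define E_γ(x,t) := exp(−γ g(x,t)(d−x)²/(4εt)). Then for all t ∈ (0,T] and all x ∈ (0,1) with x ≠ d: (𝓛E_γ)(x,t) ≥ γ g(x,t) E_γ(x,t)/(2t) ≥ γ δ² E_γ(x,t)/(2T) > 0. -/

import Mathlib

/-- The coefficient `g(x,t)`: `(d(t)/d)²` for `x < d` and `((1-d(t))/(1-d))²` for `x > d`. -/
noncomputable def gfun (d : ℝ) (dd : ℝ → ℝ) (x t : ℝ) : ℝ :=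
  if x < d then (dd t / d) ^ 2 else ((1 - dd t) / (1 - d)) ^ 2

/-- The change of variables: `s(x,t) = (d(t)/d)x` for `x ≤ d` and
`s(x,t) = 1 - ((1-d(t))/(1-d))(1-x)` for `x ≥ d`. -/
noncomputable def smap (d : ℝ) (dd : ℝ → ℝ) (x t : ℝ) : ℝ :=
  if x ≤ d then (dd t / d) * x else 1 - ((1 - dd t) / (1 - d)) * (1 - x)

/-- `ψ_d(x) = (d-x)/d` for `x < d` and `(x-d)/(1-d)` for `x > d`. -/
noncomputable def psid (d x : ℝ) : ℝ :=
  if x < d then (d - x) / d else (x - d) / (1 - d)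

/-- `κ(x,t) = sqrt(g(x,t)) (a(x,t) + a(d,t)(ψ_d(x) - 1))`, where
`a(x,t) = â(s(x,t),t)` and `a(d,t) = â(d(t),t)`. -/
noncomputable def kappa (ahat : ℝ → ℝ → ℝ) (d : ℝ) (dd : ℝ → ℝ) (x t : ℝ) : ℝ :=
  Real.sqrt (gfun d dd x t) *
    (ahat (smap d dd x t) t + ahat (dd t) t * (psid d x - 1))

/-- The transformed operator `(𝓛F)(x,t) = -ε F_xx + κ F_x + g F_t`. -/
noncomputable def LL (ε : ℝ) (ahat : ℝ → ℝ → ℝ) (d : ℝ) (dd : ℝ → ℝ)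
    (F : ℝ → ℝ → ℝ) (x t : ℝ) : ℝ :=
  -ε * iteratedDeriv 2 (fun x' => F x' t) x
    + kappa ahat d dd x t * deriv (fun x' => F x' t) x
    + gfun d dd x t * deriv (fun t' => F x t') t

/-- The sup of `|∂â/∂s|` over `[0,1] × [0,T]`. -/
noncomputable def supAbsDs (f : ℝ → ℝ → ℝ) (T : ℝ) : ℝ :=
  sSup ((fun p : ℝ × ℝ => |deriv (fun s' => f s' p.2) p.1|) ''
    (Set.Icc 0 1 ×ˢ Set.Icc 0 T))

/-- The layer function `E_γ(x,t) = exp(-γ g(x,t)(d-x)²/(4εt))`. -/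
noncomputable def Egam (γ ε d : ℝ) (dd : ℝ → ℝ) (x t : ℝ) : ℝ :=
  Real.exp (-(γ * gfun d dd x t * (d - x) ^ 2) / (4 * ε * t))

/-!
On each side of `d` the change of variables is affine in `x`, with stretching factor `r(t)`
satisfying `g = r²`, so `E_γ` is there a Gaussian `exp(-γ r² (d-x)² / (4εt))` and `𝓛E_γ` can be
computed in closed form: it equals `γ g E_γ / (2t)` plus a nonnegative multiple of
`(1-γ) r² (d-x)²/t + 2 r (d-x) (â(s,t) - â(d(t),t))`. By the mean value theorem the second term is
at least `-2 sup|∂ₛâ| r² (d-x)²`, which the first absorbs because `2t sup|∂ₛâ| ≤ 1-γ`. Finally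
`d(t)` is increasing, so `δ ≤ r`.
-/

open Set Filter Topology

/-- `E_γ` with `g(x,t)` replaced by `r(t)²`; this is the form of `E_γ` on either side of `d`. -/
noncomputable def gaussLayer (γ ε d : ℝ) (r : ℝ → ℝ) (x t : ℝ) : ℝ :=
  Real.exp (-(γ * r t ^ 2 * (d - x) ^ 2) / (4 * ε * t))

lemma hasDerivAt_exp_mul_sub_sq (c d x : ℝ) :
    HasDerivAt (fun x' => Real.exp (c * (d - x') ^ 2))
      (-2 * c * (d - x) * Real.exp (c * (d - x) ^ 2)) x := by
  refine ((((hasDerivAt_id x).const_sub d).pow 2).const_mul c).exp.congr_deriv ?_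
  simp only [id, Pi.pow_apply]
  ring

lemma iteratedDeriv_two_exp_mul_sub_sq (c d x : ℝ) :
    iteratedDeriv 2 (fun x' => Real.exp (c * (d - x') ^ 2)) x
      = (2 * c + 4 * c ^ 2 * (d - x) ^ 2) * Real.exp (c * (d - x) ^ 2) := by
  have hderiv : deriv (fun x' => Real.exp (c * (d - x') ^ 2))
      = fun x' => -2 * c * (d - x') * Real.exp (c * (d - x') ^ 2) :=
    funext fun y => (hasDerivAt_exp_mul_sub_sq c d y).deriv
  have h : HasDerivAt (fun x' => -2 * c * (d - x') * Real.exp (c * (d - x') ^ 2))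
      ((2 * c + 4 * c ^ 2 * (d - x) ^ 2) * Real.exp (c * (d - x) ^ 2)) x := by
    refine ((((hasDerivAt_id x).const_sub d).const_mul (-2 * c)).mul
      (hasDerivAt_exp_mul_sub_sq c d x)).congr_deriv ?_
    simp only [id]
    ring
  rw [iteratedDeriv_succ, iteratedDeriv_one, hderiv, h.deriv]

section GaussLayer

variable {γ ε d : ℝ} {r : ℝ → ℝ} {x t : ℝ}

lemma gaussLayer_slice (γ ε d : ℝ) (r : ℝ → ℝ) (t : ℝ) :
    (fun x' => gaussLayer γ ε d r x' t)
      = fun x' => Real.exp (-(γ * r t ^ 2) / (4 * ε * t) * (d - x') ^ 2) := by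
  funext x'
  rw [gaussLayer]
  ring_nf

lemma hasDerivAt_gaussLayer_time {r' : ℝ} (hr : HasDerivAt r r' t) (hε : ε ≠ 0) (ht : t ≠ 0) :
    HasDerivAt (fun t' => gaussLayer γ ε d r x t')
      (gaussLayer γ ε d r x t * (γ * r t * (d - x) ^ 2 * (r t - 2 * t * r') / (4 * ε * t ^ 2)))
      t := by
  have hnum := ((hr.pow 2).const_mul γ).mul_const ((d - x) ^ 2) |>.neg
  have hden := (hasDerivAt_id t).const_mul (4 * ε)
  refine (hnum.div hden (by simp [hε, ht])).exp.congr_deriv ?_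
  simp only [id, gaussLayer, Pi.pow_apply, Pi.neg_apply, Pi.div_apply]
  field_simp
  ring

lemma gaussLayer_operator_eq {r' : ℝ} (K : ℝ) (hr : HasDerivAt r r' t) (hε : ε ≠ 0)
    (ht : t ≠ 0) :
    -ε * iteratedDeriv 2 (fun x' => gaussLayer γ ε d r x' t) x
        + K * deriv (fun x' => gaussLayer γ ε d r x' t) x
        + r t ^ 2 * deriv (fun t' => gaussLayer γ ε d r x t') t
      = γ * r t ^ 2 * gaussLayer γ ε d r x t / (2 * t)
        + γ * r t ^ 2 * gaussLayer γ ε d r x t / (4 * ε * t) *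
          ((1 - γ) * r t ^ 2 * (d - x) ^ 2 / t + 2 * (d - x) * (K - r t * r' * (d - x))) := by
  rw [(hasDerivAt_gaussLayer_time hr hε ht).deriv, gaussLayer_slice,
    iteratedDeriv_two_exp_mul_sub_sq, (hasDerivAt_exp_mul_sub_sq _ d x).deriv,
    ← congrFun (gaussLayer_slice γ ε d r t) x]
  field_simp
  ring

lemma le_gaussLayer_operator {r' K M : ℝ} (hε : 0 < ε) (ht : 0 < t) (hγ : 0 ≤ γ)
    (hr : HasDerivAt r r' t) (hMt : 2 * t * M ≤ 1 - γ)
    (hK : |K - r t * r' * (d - x)| ≤ M * r t ^ 2 * |d - x|) :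
    γ * r t ^ 2 * gaussLayer γ ε d r x t / (2 * t)
      ≤ -ε * iteratedDeriv 2 (fun x' => gaussLayer γ ε d r x' t) x
        + K * deriv (fun x' => gaussLayer γ ε d r x' t) x
        + r t ^ 2 * deriv (fun t' => gaussLayer γ ε d r x t') t := by
  rw [gaussLayer_operator_eq K hr hε.ne' ht.ne']
  have hdiffusion : 2 * M * r t ^ 2 * (d - x) ^ 2 ≤ (1 - γ) * r t ^ 2 * (d - x) ^ 2 / t := by
    rw [le_div_iff₀ ht]
    nlinarith [sq_nonneg (r t * (d - x))]
  have hdrift : -(2 * M * r t ^ 2 * (d - x) ^ 2) ≤ 2 * (d - x) * (K - r t * r' * (d - x)) := by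
    have h := neg_abs_le (2 * (d - x) * (K - r t * r' * (d - x)))
    have habs : |2 * (d - x) * (K - r t * r' * (d - x))| ≤ 2 * M * r t ^ 2 * (d - x) ^ 2 := by
      rw [abs_mul, abs_mul, abs_two, ← sq_abs (d - x)]
      nlinarith [abs_nonneg (d - x)]
    linarith
  have hpref : 0 ≤ γ * r t ^ 2 * gaussLayer γ ε d r x t / (4 * ε * t) := by
    unfold gaussLayer; positivity
  exact le_add_of_nonneg_right (mul_nonneg hpref (by linarith))

end GaussLayer

section SupAbsDs

variable {ahat : ℝ → ℝ → ℝ} {T : ℝ}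

lemma hasDerivWithinAt_slice
    (haC1 : ContDiffOn ℝ 1 (fun p : ℝ × ℝ => ahat p.1 p.2) (Icc 0 1 ×ˢ Icc 0 T))
    {s t : ℝ} (hs : s ∈ Icc (0 : ℝ) 1) (ht : t ∈ Icc 0 T) :
    HasDerivWithinAt (fun s' => ahat s' t)
      (fderivWithin ℝ (fun p : ℝ × ℝ => ahat p.1 p.2) (Icc 0 1 ×ˢ Icc 0 T) (s, t) (1, 0))
      (Icc 0 1) s := by
  have hF := (haC1.differentiableOn one_ne_zero (s, t) ⟨hs, ht⟩).hasFDerivWithinAt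
  have hι : HasDerivWithinAt (fun s' : ℝ => (s', t)) ((1 : ℝ), (0 : ℝ)) (Icc 0 1) s :=
    ((hasDerivAt_id s).prodMk (hasDerivAt_const s t)).hasDerivWithinAt
  exact hF.comp_hasDerivWithinAt s hι fun s' hs' =>
    (⟨hs', ht⟩ : (s', t) ∈ Icc (0 : ℝ) 1 ×ˢ Icc 0 T)

lemma exists_bound_abs_deriv_slice (hT : 0 < T)
    (haC1 : ContDiffOn ℝ 1 (fun p : ℝ × ℝ => ahat p.1 p.2) (Icc 0 1 ×ˢ Icc 0 T)) :
    ∃ C, ∀ s ∈ Icc (0 : ℝ) 1, ∀ t ∈ Icc 0 T, |deriv (fun s' => ahat s' t) s| ≤ C := by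
  have hK : UniqueDiffOn ℝ (Icc (0 : ℝ) 1 ×ˢ Icc 0 T) :=
    (uniqueDiffOn_Icc one_pos).prod (uniqueDiffOn_Icc hT)
  obtain ⟨C, hC⟩ := (isCompact_Icc.prod isCompact_Icc).exists_bound_of_continuousOn
    (haC1.continuousOn_fderivWithin hK le_rfl)
  refine ⟨C, fun s hs t ht => ?_⟩
  by_cases hdiff : DifferentiableAt ℝ (fun s' => ahat s' t) s
  · rw [← hdiff.derivWithin (uniqueDiffOn_Icc one_pos s hs),
      (hasDerivWithinAt_slice haC1 hs ht).derivWithin (uniqueDiffOn_Icc one_pos s hs)]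
    calc _ ≤ ‖fderivWithin ℝ (fun p : ℝ × ℝ => ahat p.1 p.2) (Icc 0 1 ×ˢ Icc 0 T) (s, t)‖
            * ‖((1 : ℝ), (0 : ℝ))‖ := ContinuousLinearMap.le_opNorm _ _
      _ ≤ C := by simpa [Prod.norm_def] using hC (s, t) ⟨hs, ht⟩
  · rw [deriv_zero_of_not_differentiableAt hdiff, abs_zero]
    exact (norm_nonneg _).trans (hC (s, t) ⟨hs, ht⟩)

lemma abs_deriv_le_supAbsDs (hT : 0 < T)
    (haC1 : ContDiffOn ℝ 1 (fun p : ℝ × ℝ => ahat p.1 p.2) (Icc 0 1 ×ˢ Icc 0 T))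
    {s t : ℝ} (hs : s ∈ Icc (0 : ℝ) 1) (ht : t ∈ Icc 0 T) :
    |deriv (fun s' => ahat s' t) s| ≤ supAbsDs ahat T := by
  obtain ⟨C, hC⟩ := exists_bound_abs_deriv_slice hT haC1
  refine le_csSup ⟨C, ?_⟩ ⟨(s, t), ⟨hs, ht⟩, rfl⟩
  rintro _ ⟨⟨s', t'⟩, ⟨hs', ht'⟩, rfl⟩
  exact hC s' hs' t' ht'

lemma supAbsDs_nonneg (hT : 0 < T)
    (haC1 : ContDiffOn ℝ 1 (fun p : ℝ × ℝ => ahat p.1 p.2) (Icc 0 1 ×ˢ Icc 0 T)) :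
    0 ≤ supAbsDs ahat T :=
  (abs_nonneg _).trans
    (abs_deriv_le_supAbsDs hT haC1 (left_mem_Icc.2 zero_le_one) (left_mem_Icc.2 hT.le))

lemma abs_sub_le_supAbsDs_mul (hT : 0 < T)
    (haC1 : ContDiffOn ℝ 1 (fun p : ℝ × ℝ => ahat p.1 p.2) (Icc 0 1 ×ˢ Icc 0 T))
    {s₁ s₂ t : ℝ} (hs₁ : s₁ ∈ Ioo (0 : ℝ) 1) (hs₂ : s₂ ∈ Ioo (0 : ℝ) 1) (ht : t ∈ Icc 0 T) :
    |ahat s₁ t - ahat s₂ t| ≤ supAbsDs ahat T * |s₁ - s₂| := by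
  have hdiff : ∀ s ∈ Ioo (0 : ℝ) 1, DifferentiableAt ℝ (fun s' => ahat s' t) s := fun s hs =>
    ((hasDerivWithinAt_slice haC1 (Ioo_subset_Icc_self hs) ht).hasDerivAt
      (Icc_mem_nhds hs.1 hs.2)).differentiableAt
  exact (convex_Ioo 0 1).norm_image_sub_le_of_norm_deriv_le hdiff
    (fun s hs => abs_deriv_le_supAbsDs hT haC1 (Ioo_subset_Icc_self hs) ht) hs₂ hs₁

end SupAbsDs

lemma monotoneOn_Icc_of_hasDerivAt_nonneg {f f' : ℝ → ℝ} {a b : ℝ}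
    (hf : ∀ t ∈ Icc a b, HasDerivAt f (f' t) t) (hf' : ∀ t ∈ Icc a b, 0 ≤ f' t) :
    MonotoneOn f (Icc a b) := by
  refine monotoneOn_of_hasDerivWithinAt_nonneg (convex_Icc a b)
    (fun t ht => (hf t ht).continuousAt.continuousWithinAt)
    (fun t ht => (hf t (interior_subset ht)).hasDerivWithinAt)
    (fun t ht => hf' t (interior_subset ht))

/-- The stretching factor of the change of variables on the side of `d` containing `x`:
`g = scale²` and `s(x,t) = d(t) + scale · (x - d)`. -/
noncomputable def scale (d : ℝ) (dd : ℝ → ℝ) (x t : ℝ) : ℝ :=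
  if x < d then dd t / d else (1 - dd t) / (1 - d)

section Scale

variable {d : ℝ} {dd : ℝ → ℝ} {x t : ℝ}

lemma gfun_eq_scale_sq : gfun d dd x t = scale d dd x t ^ 2 := by
  unfold gfun scale
  split_ifs <;> rfl

lemma smap_eq_add_scale_mul (hd₀ : d ≠ 0) (hd₁ : 1 - d ≠ 0) :
    smap d dd x t = dd t + scale d dd x t * (x - d) := by
  unfold smap scale
  rcases lt_trichotomy x d with hlt | rfl | hgt
  · simp only [if_pos hlt.le, if_pos hlt]
    field_simp
    ring
  · simp only [le_refl, if_true, lt_irrefl, if_false]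
    field_simp
    ring
  · simp only [if_neg (not_le.mpr hgt), if_neg (not_lt.mpr hgt.le)]
    field_simp
    ring

lemma scale_eventuallyEq (hx : x ≠ d) : ∀ᶠ x' in 𝓝 x, scale d dd x' = scale d dd x := by
  rcases hx.lt_or_gt with hlt | hgt
  · filter_upwards [Iio_mem_nhds hlt] with x' (hx' : x' < d)
    funext s
    simp only [scale, if_pos hx', if_pos hlt]
  · filter_upwards [Ioi_mem_nhds hgt] with x' (hx' : d < x')
    funext s
    simp only [scale, if_neg (not_lt.mpr hx'.le), if_neg (not_lt.mpr hgt.le)]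

lemma hasDerivAt_scale {a : ℝ} (h : HasDerivAt dd a t) :
    HasDerivAt (scale d dd x) (if x < d then a / d else -a / (1 - d)) t := by
  by_cases hx : x < d
  · have hscale : scale d dd x = fun s => dd s / d := funext fun _ => if_pos hx
    simpa only [hscale, if_pos hx] using h.div_const d
  · have hscale : scale d dd x = fun s => (1 - dd s) / (1 - d) := funext fun _ => if_neg hx
    simpa only [hscale, if_neg hx] using (h.const_sub 1).div_const (1 - d)

lemma Egam_eq_gaussLayer (γ ε : ℝ) :
    Egam γ ε d dd x t = gaussLayer γ ε d (scale d dd x) x t := by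
  rw [Egam, gfun_eq_scale_sq]
  rfl

lemma Egam_eventuallyEq_gaussLayer (γ ε : ℝ) (hx : x ≠ d) :
    (fun x' => Egam γ ε d dd x' t) =ᶠ[𝓝 x] fun x' => gaussLayer γ ε d (scale d dd x) x' t := by
  filter_upwards [scale_eventuallyEq hx] with x' hx'
  rw [Egam_eq_gaussLayer, hx']

/-- The drift `κ` exactly compensates the motion of the interface, up to the variation of `â`
between `s(x,t)` and `d(t)`. -/
lemma kappa_sub_eq (ahat : ℝ → ℝ → ℝ) (hr : 0 ≤ scale d dd x t) (hd₀ : d ≠ 0)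
    (hd₁ : 1 - d ≠ 0) :
    kappa ahat d dd x t
        - scale d dd x t * (if x < d then ahat (dd t) t / d else -ahat (dd t) t / (1 - d))
          * (d - x)
      = scale d dd x t * (ahat (smap d dd x t) t - ahat (dd t) t) := by
  rw [kappa, gfun_eq_scale_sq, Real.sqrt_sq hr]
  unfold psid
  split_ifs
  · field_simp
    ring
  · field_simp
    ring

lemma smap_mem_Ioo (hd : d ∈ Ioo (0 : ℝ) 1) (hx : x ∈ Ioo (0 : ℝ) 1)
    (hdd : dd t ∈ Ioo (0 : ℝ) 1) : smap d dd x t ∈ Ioo (0 : ℝ) 1 := by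
  obtain ⟨hd₀, hd₁⟩ := hd
  obtain ⟨hx₀, hx₁⟩ := hx
  obtain ⟨hdd₀, hdd₁⟩ := hdd
  unfold smap
  split_ifs with hxd
  · have hle : dd t / d * x ≤ dd t / d * d := by gcongr
    rw [div_mul_cancel₀ _ hd₀.ne'] at hle
    exact ⟨by positivity, by linarith⟩
  · have hdx : d < x := not_le.mp hxd
    have hlt : (1 - dd t) / (1 - d) * (1 - x) < (1 - dd t) / (1 - d) * (1 - d) := by
      gcongr
    rw [div_mul_cancel₀ _ (by linarith)] at hlt
    have hpos : 0 < (1 - dd t) / (1 - d) * (1 - x) :=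
      mul_pos (div_pos (by linarith) (by linarith)) (by linarith)
    constructor <;> linarith

lemma scale_pos (hd : d ∈ Ioo (0 : ℝ) 1) (hdd : dd t ∈ Ioo (0 : ℝ) 1) : 0 < scale d dd x t := by
  unfold scale
  split_ifs
  · exact div_pos hdd.1 hd.1
  · exact div_pos (by linarith [hdd.2]) (by linarith [hd.2])

lemma one_sub_div_one_sub_le_scale {T : ℝ} (hd : d ∈ Ioo (0 : ℝ) 1) (hdt : d ≤ dd t)
    (htT : dd t ≤ dd T) : (1 - dd T) / (1 - d) ≤ scale d dd x t := by
  have h1d : 0 < 1 - d := by linarith [hd.2]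
  unfold scale
  split_ifs
  · calc (1 - dd T) / (1 - d) ≤ 1 := by rw [div_le_one h1d]; linarith
      _ ≤ dd t / d := by rw [one_le_div hd.1]; exact hdt
  · gcongr

end Scale

lemma LL_congr {ε : ℝ} {ahat : ℝ → ℝ → ℝ} {d : ℝ} {dd : ℝ → ℝ} {F G : ℝ → ℝ → ℝ} {x t : ℝ}
    (hx : (fun x' => F x' t) =ᶠ[𝓝 x] fun x' => G x' t) (ht : ∀ t', F x t' = G x t') :
    LL ε ahat d dd F x t = LL ε ahat d dd G x t := by
  rw [LL, LL, hx.iteratedDeriv_eq, hx.deriv_eq, funext ht]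

lemma gfun_mul_Egam_le_LL {ε : ℝ} {ahat : ℝ → ℝ → ℝ} {d : ℝ} {dd : ℝ → ℝ} {γ x t M : ℝ}
    (hε : 0 < ε) (ht : 0 < t) (hγ : 0 ≤ γ) (hd₀ : 0 < d) (hd₁ : d < 1) (hx : x ≠ d)
    (hdd : HasDerivAt dd (ahat (dd t) t) t) (hr : 0 ≤ scale d dd x t)
    (hMt : 2 * t * M ≤ 1 - γ)
    (hlip : |ahat (smap d dd x t) t - ahat (dd t) t| ≤ M * |smap d dd x t - dd t|) :
    γ * gfun d dd x t * Egam γ ε d dd x t / (2 * t) ≤ LL ε ahat d dd (Egam γ ε d dd) x t := by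
  rw [LL_congr (Egam_eventuallyEq_gaussLayer γ ε hx) fun _ => Egam_eq_gaussLayer γ ε, LL,
    gfun_eq_scale_sq, Egam_eq_gaussLayer]
  refine le_gaussLayer_operator hε ht hγ (hasDerivAt_scale hdd) hMt ?_
  rw [kappa_sub_eq ahat hr hd₀.ne' (by linarith), abs_mul, abs_of_nonneg hr]
  have hshift : smap d dd x t - dd t = scale d dd x t * (x - d) := by
    rw [smap_eq_add_scale_mul hd₀.ne' (by linarith)]
    ring
  rw [hshift, abs_mul, abs_of_nonneg hr, abs_sub_comm x d] at hlip
  calc scale d dd x t * |ahat (smap d dd x t) t - ahat (dd t) t|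
      ≤ scale d dd x t * (M * (scale d dd x t * |d - x|)) := mul_le_mul_of_nonneg_left hlip hr
    _ = M * scale d dd x t ^ 2 * |d - x| := by ring

/-- under assumption `(2T/δ)·sup|∂â/∂s| ≤ 1 - γ` with `γ ∈ (0,1)` and
`δ = (1-d(T))/(1-d)`, for all `t ∈ (0,T]` and `x ∈ (0,1)` with `x ≠ d`:
`(𝓛E_γ)(x,t) ≥ γ g(x,t) E_γ(x,t)/(2t) ≥ γ δ² E_γ(x,t)/(2T) > 0`. -/
theorem stmt_13
    (ε T d α : ℝ) (hε : 0 < ε) (hT : 0 < T) (hd : d ∈ Set.Ioo (0 : ℝ) 1) (hα : 0 < α)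
    (ahat : ℝ → ℝ → ℝ)
    (haC1 : ContDiffOn ℝ 1 (fun p : ℝ × ℝ => ahat p.1 p.2)
      (Set.Icc 0 1 ×ˢ Set.Icc 0 T))
    (haα : ∀ s ∈ Set.Icc (0 : ℝ) 1, ∀ t ∈ Set.Icc (0 : ℝ) T, α ≤ ahat s t)
    (dd : ℝ → ℝ)
    (hddODE : ∀ t ∈ Set.Icc (0 : ℝ) T, HasDerivAt dd (ahat (dd t) t) t)
    (hdd0 : dd 0 = d)
    (hddQ : ∀ t ∈ Set.Icc (0 : ℝ) T, dd t ∈ Set.Ioo (0 : ℝ) 1)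
    (hddT : dd T < 1)
    (γ : ℝ) (hγ : γ ∈ Set.Ioo (0 : ℝ) 1)
    (hconstraint :
      (2 * T / ((1 - dd T) / (1 - d))) * supAbsDs ahat T ≤ 1 - γ) :
    ∀ t ∈ Set.Ioc (0 : ℝ) T, ∀ x ∈ Set.Ioo (0 : ℝ) 1, x ≠ d →
      γ * gfun d dd x t * Egam γ ε d dd x t / (2 * t)
        ≤ LL ε ahat d dd (Egam γ ε d dd) x t ∧
      γ * ((1 - dd T) / (1 - d)) ^ 2 * Egam γ ε d dd x t / (2 * T)
        ≤ γ * gfun d dd x t * Egam γ ε d dd x t / (2 * t) ∧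
      0 < γ * ((1 - dd T) / (1 - d)) ^ 2 * Egam γ ε d dd x t / (2 * T) := by
  intro t ht x hx hxd
  have htI : t ∈ Icc 0 T := Ioc_subset_Icc_self ht
  have hmono : MonotoneOn dd (Icc 0 T) := monotoneOn_Icc_of_hasDerivAt_nonneg hddODE
    fun s hs => hα.le.trans (haα _ (Ioo_subset_Icc_self (hddQ s hs)) s hs)
  have hd_le : d ≤ dd t := hdd0 ▸ hmono (left_mem_Icc.2 hT.le) htI ht.1.le
  have hle_T : dd t ≤ dd T := hmono htI (right_mem_Icc.2 hT.le) ht.2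
  have hδ : 0 < (1 - dd T) / (1 - d) := div_pos (by linarith) (by linarith [hd.2])
  have hδ_le : (1 - dd T) / (1 - d) ≤ scale d dd x t :=
    one_sub_div_one_sub_le_scale hd hd_le hle_T
  have hM := supAbsDs_nonneg hT haC1
  have hMt : 2 * t * supAbsDs ahat T ≤ 1 - γ := by
    refine le_trans ?_ hconstraint
    gcongr
    calc 2 * t ≤ 2 * T := by linarith [ht.2]
      _ ≤ 2 * T / ((1 - dd T) / (1 - d)) :=
        le_div_self (by linarith) hδ (by rw [div_le_one (by linarith [hd.2])]; linarith)
  have hE : 0 < Egam γ ε d dd x t := Real.exp_pos _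
  refine ⟨gfun_mul_Egam_le_LL hε ht.1 hγ.1.le hd.1 hd.2 hxd (hddODE t htI)
    (scale_pos hd (hddQ t htI)).le hMt
    (abs_sub_le_supAbsDs_mul hT haC1 (smap_mem_Ioo hd hx (hddQ t htI)) (hddQ t htI) htI), ?_, ?_⟩
  · rw [gfun_eq_scale_sq]
    have hγ₀ := hγ.1.le
    refine div_le_div₀ (by have := hE.le; positivity) ?_ (by linarith [ht.1]) (by linarith [ht.2])
    gcongr
  · exact div_pos (mul_pos (mul_pos hγ.1 (pow_pos hδ 2)) hE) (by linarith)
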